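/- arXiv:2309.15799 — 4 statements merged into one kernel-verified Lean document; each statement's English description precedes it below -/
import Mathlib

section
/- The symmetrization of the function p_n(x_1,...,x_n) = ∏_{k=1}^n x_k/(x_k + x_{k+1} + ... + x_n) is constant equal to 1: for any positive reals x_1,...,x_n, the sum of p_n(x_{σ(1)},...,x_{σ(n)}) over all permutations σ of {1,...,n} equals 1. -/
/-- Ranking probability `p_n(x_1,…,x_n) = ∏_k x_k / (x_k + x_{k+1} + ⋯ + x_n)`. -/
noncomputable def sbp {n : ℕ} (x : Fin n → ℝ) : ℝ :=
  ∏ k : Fin n, x k / ∑ j ∈ Finset.Ici k, x j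

lemma Ici_succ_eq_map {n : ℕ} (k : Fin n) :
    Finset.Ici k.succ = (Finset.Ici k).map ⟨Fin.succ, Fin.succ_injective n⟩ := by
  ext j
  simp only [Finset.mem_Ici, Finset.mem_map, Function.Embedding.coeFn_mk]
  constructor
  · intro hj
    have h0 : j ≠ 0 := by
      intro h; subst h; exact absurd hj (by simp [Fin.le_def])
    obtain ⟨i, rfl⟩ := Fin.exists_succ_eq.2 h0
    exact ⟨i, Fin.succ_le_succ_iff.1 hj, rfl⟩
  · rintro ⟨i, hi, rfl⟩
    exact Fin.succ_le_succ_iff.2 hi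

lemma sbp_sum_aux : ∀ (n : ℕ) (x : Fin n → ℝ), (∀ i, 0 < x i) →
    ∑ σ : Equiv.Perm (Fin n), sbp (x ∘ σ) = 1 := by
  intro n
  induction n with
  | zero =>
    intro x _
    simp [sbp, Finset.univ_eq_empty (α := Fin 0)]
  | succ n ih =>
    intro x hx
    have hS : 0 < ∑ j, x j := Finset.sum_pos (fun i _ => hx i) ⟨0, Finset.mem_univ 0⟩
    rw [← Equiv.sum_comp (Equiv.Perm.decomposeFin (n := n)).symm, Fintype.sum_prod_type]
    have key : ∀ (p : Fin (n+1)) (e : Equiv.Perm (Fin n)),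
        sbp (x ∘ (Equiv.Perm.decomposeFin.symm (p, e))) =
        (x p / ∑ j, x j) * sbp ((fun a => x (Equiv.swap 0 p a.succ)) ∘ e) := by
      intro p e
      unfold sbp
      rw [Fin.prod_univ_succ]
      congr 1
      · rw [Function.comp_apply, Equiv.Perm.decomposeFin_symm_apply_zero]
        congr 1
        rw [show Finset.Ici (0 : Fin (n+1)) = Finset.univ from Finset.ext fun j => by simp [Fin.zero_le]]
        exact Equiv.sum_comp _ x
      · refine Finset.prod_congr rfl (fun k _ => ?_)
        rw [Function.comp_apply, Function.comp_apply, Equiv.Perm.decomposeFin_symm_apply_succ]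
        congr 1
        rw [Ici_succ_eq_map, Finset.sum_map]
        refine Finset.sum_congr rfl (fun j _ => ?_)
        simp only [Function.Embedding.coeFn_mk, Function.comp_apply,
          Equiv.Perm.decomposeFin_symm_apply_succ]
    calc ∑ p : Fin (n+1), ∑ e : Equiv.Perm (Fin n),
            sbp (x ∘ (Equiv.Perm.decomposeFin.symm (p, e)))
        = ∑ p : Fin (n+1), (x p / ∑ j, x j) := by
          refine Finset.sum_congr rfl (fun p _ => ?_)
          rw [Finset.sum_congr rfl (fun e _ => key p e), ← Finset.mul_sum,
            ih _ (fun a => hx _), mul_one]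
      _ = 1 := by rw [← Finset.sum_div, div_self hS.ne']

theorem symmetrization_eq_one (n : ℕ) (hn : 0 < n) (x : Fin n → ℝ)
    (hx : ∀ i, 0 < x i) :
    ∑ σ : Equiv.Perm (Fin n), sbp (x ∘ σ) = 1 := by
  exact sbp_sum_aux n x hx
end

section
/- For independent exponential random variables X_1,...,X_n with rates w_1,...,w_n > 0, the ranking probability P[X_1 < X_2 < ... < X_n] equals ∏_{k=1}^n w_k/(w_k + w_{k+1} + ... + w_n). -/
/-!
For `t ≥ 0`, the probability that `X₁ < ⋯ < Xₙ` with all `Xᵢ > t` is `exp (-(w₁ + ⋯ + wₙ) t)`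
times the product; induct on `n` by conditioning on `X₁ = a > t`. The remaining variables must
then be increasing and above `a`, which has probability `exp (-(w₂ + ⋯ + wₙ) a)` times the
product for `w₂, …, wₙ`; integrating against the density `w₁ exp (-w₁ a)` over `a > t` yields
the factor `w₁ / (w₁ + ⋯ + wₙ)` and `exp (-(w₁ + ⋯ + wₙ) t)`. Taking `t = 0` loses nothing
because the `Xᵢ` are almost surely positive.
-/

open MeasureTheory ProbabilityTheory Real Set

lemma measurable_exponentialPDF {r : ℝ} : Measurable (exponentialPDF r) :=
  (measurable_exponentialPDFReal r).ennreal_ofReal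

lemma lintegral_Ioi_exp_neg_mul {b : ℝ} (hb : 0 < b) (t : ℝ) :
    ∫⁻ x in Ioi t, ENNReal.ofReal (exp (-(b * x))) = ENNReal.ofReal (exp (-(b * t)) / b) := by
  have hb' : -b < 0 := neg_lt_zero.mpr hb
  simp_rw [← neg_mul]
  rw [← ofReal_integral_eq_lintegral_ofReal (integrableOn_exp_mul_Ioi hb' t)
    (Filter.Eventually.of_forall fun _ => (exp_pos _).le), integral_exp_mul_Ioi hb', neg_div_neg_eq]

lemma setLIntegral_Ioi_exp_neg_mul_expMeasure {a b t : ℝ} (hab : 0 < a + b) (ht : 0 ≤ t) :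
    ∫⁻ x in Ioi t, ENNReal.ofReal (exp (-(a * x))) ∂expMeasure b
      = ENNReal.ofReal (b / (a + b) * exp (-((a + b) * t))) := by
  have hdensity : ∀ x ∈ Ioi t, (exponentialPDF b * fun x => ENNReal.ofReal (exp (-(a * x)))) x
      = ENNReal.ofReal b * ENNReal.ofReal (exp (-((a + b) * x))) := by
    intro x hx
    rw [Pi.mul_apply, exponentialPDF_of_nonneg (ht.trans hx.le),
      ← ENNReal.ofReal_mul' (exp_pos _).le, ← ENNReal.ofReal_mul' (exp_pos _).le, mul_assoc,
      ← exp_add]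
    ring_nf
  change ∫⁻ x in Ioi t, _ ∂volume.withDensity (exponentialPDF b) = _
  rw [setLIntegral_withDensity_eq_setLIntegral_mul _
      measurable_exponentialPDF (by fun_prop) measurableSet_Ioi,
    setLIntegral_congr_fun measurableSet_Ioi hdensity, lintegral_const_mul _ (by fun_prop),
    lintegral_Ioi_exp_neg_mul hab, ← ENNReal.ofReal_mul' (by positivity)]
  ring_nf

lemma ae_pos_expMeasure (r : ℝ) : ∀ᵐ x ∂expMeasure r, 0 < x := by
  change ∀ᵐ x ∂volume.withDensity (exponentialPDF r), 0 < x
  rw [ae_withDensity_iff measurable_exponentialPDF]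
  filter_upwards [Measure.ae_ne volume 0] with x hx hpdf
  exact lt_of_le_of_ne (not_lt.mp fun hneg => hpdf (exponentialPDF_of_neg hneg)) hx.symm

lemma measurableSet_strictMono {ι α : Type*} [Countable ι] [Preorder ι] [LinearOrder α]
    [TopologicalSpace α] [OrderClosedTopology α] [SecondCountableTopology α] [MeasurableSpace α]
    [OpensMeasurableSpace α] : MeasurableSet {f : ι → α | StrictMono f} := by
  have h : {f : ι → α | StrictMono f} = ⋂ i, ⋂ j, ⋂ (_ : i < j), {f | f i < f j} := by
    ext f; simp [StrictMono]
  rw [h]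
  exact .iInter fun i => .iInter fun j => .iInter fun _ =>
    measurableSet_lt (measurable_pi_apply i) (measurable_pi_apply j)

lemma Fin.strictMono_cons_cons {α : Type*} [Preorder α] {m : ℕ} {t a : α} {y : Fin m → α} :
    StrictMono (Fin.cons t (Fin.cons a y : Fin (m + 1) → α) : Fin (m + 2) → α)
      ↔ t < a ∧ StrictMono (Fin.cons a y : Fin (m + 1) → α) :=
  strictMono_vecCons

lemma MeasureTheory.Measure.pi_fin_succ_apply {α : Type*} [MeasurableSpace α] {m : ℕ}
    (μ : Fin (m + 1) → Measure α) [∀ i, SigmaFinite (μ i)] {A : Set (Fin (m + 1) → α)}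
    (hA : MeasurableSet A) :
    Measure.pi μ A = ∫⁻ a, Measure.pi (fun j => μ j.succ) {y | Fin.cons a y ∈ A} ∂μ 0 := by
  have he := (measurePreserving_piFinSuccAbove μ 0).symm
  rw [← he.measure_preimage hA.nullMeasurableSet, Measure.prod_apply (he.measurable hA)]
  simp only [MeasurableEquiv.piFinSuccAbove_symm_apply, Fin.insertNthEquiv, Fin.zero_succAbove,
    Equiv.coe_fn_mk, Fin.insertNth_zero']
  rfl

lemma prod_div_sum_Ici_nonneg {m : ℕ} {w : Fin m → ℝ} (hw : ∀ k, 0 ≤ w k) :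
    0 ≤ ∏ k, w k / ∑ j ∈ Finset.Ici k, w j :=
  Finset.prod_nonneg fun k _ => div_nonneg (hw k) (Finset.sum_nonneg fun j _ => hw j)

lemma Fin.prod_div_sum_Ici_succ {m : ℕ} (w : Fin (m + 1) → ℝ) :
    ∏ k, w k / ∑ j ∈ Finset.Ici k, w j
      = (w 0 / ∑ j, w j) * ∏ k : Fin m, w k.succ / ∑ j ∈ Finset.Ici k, w j.succ := by
  simp_rw [Fin.prod_univ_succ, ← Fin.map_succEmb_Ici, Finset.sum_map]
  rw [show Finset.Ici (0 : Fin (m + 1)) = Finset.univ from Finset.Ici_bot]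
  rfl

/-- `StrictMono (Fin.cons t y)` says that `y` is increasing with all coordinates above `t`. -/
lemma pi_expMeasure_strictMono_cons {m : ℕ} (w : Fin m → ℝ) (hw : ∀ k, 0 < w k) {t : ℝ}
    (ht : 0 ≤ t) :
    Measure.pi (fun k => expMeasure (w k)) {y | StrictMono (Fin.cons t y : Fin (m + 1) → ℝ)}
      = ENNReal.ofReal (exp (-((∑ k, w k) * t)) * ∏ k, w k / ∑ j ∈ Finset.Ici k, w j) := by
  induction m generalizing t with
  | zero => simp [Subsingleton.strictMono]
  | succ m ih =>
    have := fun k => isProbabilityMeasure_expMeasure (hw k)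
    set S' := ∑ k, w (Fin.succ k)
    set C' := ∏ k, w (Fin.succ k) / ∑ j ∈ Finset.Ici k, w j.succ
    have hC' : 0 ≤ C' := prod_div_sum_Ici_nonneg fun k => (hw k.succ).le
    have hsum : ∑ k, w k = S' + w 0 := by rw [Fin.sum_univ_succ, add_comm]
    have hS'pos : 0 < S' + w 0 :=
      add_pos_of_nonneg_of_pos (Finset.sum_nonneg fun k _ => (hw k.succ).le) (hw 0)
    have hsection (a : ℝ) : Measure.pi (fun j => expMeasure (w (Fin.succ j)))
        {y | StrictMono (Fin.cons t (Fin.cons a y : Fin (m + 1) → ℝ) : Fin (m + 2) → ℝ)}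
          = (Ioi t).indicator
              (fun s => ENNReal.ofReal (exp (-(S' * s))) * ENNReal.ofReal C') a := by
      by_cases ha : t < a
      · simp only [Fin.strictMono_cons_cons, ha, true_and, indicator_of_mem (mem_Ioi.mpr ha)]
        rw [ih _ (fun k => hw k.succ) (ht.trans ha.le), ENNReal.ofReal_mul' hC']
      · simp [Fin.strictMono_cons_cons, ha]
    have hmeas :
        MeasurableSet {y : Fin (m + 1) → ℝ | StrictMono (Fin.cons t y : Fin (m + 2) → ℝ)} :=
      measurableSet_strictMono.preimage (by fun_prop)
    rw [Measure.pi_fin_succ_apply _ hmeas]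
    simp only [mem_ofPred_eq, hsection]
    rw [lintegral_indicator measurableSet_Ioi, lintegral_mul_const _ (by fun_prop),
      setLIntegral_Ioi_exp_neg_mul_expMeasure hS'pos ht, ← ENNReal.ofReal_mul' hC',
      Fin.prod_div_sum_Ici_succ, hsum, mul_right_comm, mul_comm]

theorem exp_ranking_probability (n : ℕ) (Ω : Type*) [MeasurableSpace Ω]
    (μ : Measure Ω) [IsProbabilityMeasure μ]
    (X : Fin n → Ω → ℝ) (hX : ∀ k, Measurable (X k))
    (w : Fin n → ℝ) (hw : ∀ k, 0 < w k)
    (hind : iIndepFun X μ)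
    (hdist : ∀ k, μ.map (X k) = expMeasure (w k)) :
    (μ {ω | ∀ i j : Fin n, i < j → X i ω < X j ω}).toReal =
      ∏ k : Fin n, w k / ∑ j ∈ Finset.Ici k, w j := by
  have := fun k => isProbabilityMeasure_expMeasure (hw k)
  have hlaw : μ.map (fun ω i => X i ω) = Measure.pi fun k => expMeasure (w k) := by
    simp_rw [(iIndepFun_iff_map_fun_eq_pi_map fun k => (hX k).aemeasurable).mp hind, hdist]
  have hpos : ∀ᵐ y ∂Measure.pi fun k => expMeasure (w k), ∀ k, 0 < y k :=
    ae_all_iff.mpr fun k => Measure.tendsto_eval_ae_ae.eventually (ae_pos_expMeasure (w k))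
  have hranking : μ {ω | ∀ i j : Fin n, i < j → X i ω < X j ω}
      = Measure.pi (fun k => expMeasure (w k))
          {y | StrictMono (Fin.cons 0 y : Fin (n + 1) → ℝ)} := by
    calc μ {ω | ∀ i j : Fin n, i < j → X i ω < X j ω}
        = μ.map (fun ω i => X i ω) {y | StrictMono y} :=
          (Measure.map_apply (measurable_pi_lambda _ hX) measurableSet_strictMono).symm
      _ = _ := by
          rw [hlaw]
          refine measure_congr (hpos.mono fun y hy => ?_)
          exact propext (Fin.strictMono_cons.trans (and_iff_right hy)).symm
  rw [hranking, pi_expMeasure_strictMono_cons w hw le_rfl, mul_zero, neg_zero, exp_zero, one_mul,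
    ENNReal.toReal_ofReal (prod_div_sum_Ici_nonneg fun k => (hw k).le)]
end

section
/- The dissociation (shuffle) identity: for positive reals x_1,...,x_n and y_1,...,y_m, the sum of p_{n+m}(z_1,...,z_{n+m}) over all shuffles (interleavings z preserving the relative order of the x's and of the y's) equals p_n(x_1,...,x_n)·p_m(y_1,...,y_m). -/
/-- Ranking probability of a list: `pL [x_1,…,x_n] = ∏_k x_k/(x_k + ⋯ + x_n)`. -/
noncomputable def pL : List ℝ → ℝ
  | [] => 1
  | x :: xs => x / (x + xs.sum) * pL xs

/-- The list of all shuffles (order-preserving interleavings) of two lists. -/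
def shuffles : List ℝ → List ℝ → List (List ℝ)
  | [], ys => [ys]
  | x :: xs, [] => [x :: xs]
  | x :: xs, y :: ys =>
      (shuffles xs (y :: ys)).map (x :: ·) ++ (shuffles (x :: xs) ys).map (y :: ·)
  termination_by xs ys => xs.length + ys.length

/-!
Split the sum according to whether a shuffle of `x :: xs` and `y :: ys` starts with `x` or
with `y`. All shuffles have the same total `X + Y`, where `X = x + xs.sum`, `Y = y + ys.sum`,
so the first factor of `pL` is `x / (X + Y)` resp. `y / (X + Y)`, and induction turns the
two parts of the sum into `x / (X + Y) · pL xs · pL (y :: ys)` and `y / (X + Y) · pL (x :: xs) · pL ys`.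
These add up to `pL (x :: xs) · pL (y :: ys)` because `1 / X + 1 / Y = (X + Y) / (X Y)`.
-/

theorem sum_eq_of_mem_shuffles {xs ys zs : List ℝ} (h : zs ∈ shuffles xs ys) :
    zs.sum = xs.sum + ys.sum := by
  induction xs, ys using shuffles.induct generalizing zs with
  | case1 ys => simp_all [shuffles]
  | case2 x xs => simp_all [shuffles]
  | case3 x xs y ys ih₁ ih₂ =>
    rw [shuffles, List.mem_append, List.mem_map, List.mem_map] at h
    rcases h with ⟨ws, hws, rfl⟩ | ⟨ws, hws, rfl⟩
    · simp only [List.sum_cons, ih₁ hws]; ring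
    · simp only [List.sum_cons, ih₂ hws]; ring

theorem sum_map_pL_map_cons (a s : ℝ) {L : List (List ℝ)} (hL : ∀ zs ∈ L, zs.sum = s) :
    ((L.map (a :: ·)).map pL).sum = a / (a + s) * (L.map pL).sum := by
  rw [List.map_map, ← List.sum_map_mul_left]
  refine congrArg List.sum (List.map_congr_left fun zs hzs => ?_)
  simp only [Function.comp_apply, pL, hL zs hzs]

theorem pL_cons_mul_pL_cons {x y : ℝ} {xs ys : List ℝ}
    (hX : 0 < x + xs.sum) (hY : 0 < y + ys.sum) :
    pL (x :: xs) * pL (y :: ys) =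
      x / (x + (xs.sum + (y :: ys).sum)) * (pL xs * pL (y :: ys))
        + y / (y + ((x :: xs).sum + ys.sum)) * (pL (x :: xs) * pL ys) := by
  simp only [pL, List.sum_cons]
  rw [show x + (xs.sum + (y + ys.sum)) = x + xs.sum + (y + ys.sum) by ring,
    show y + (x + xs.sum + ys.sum) = x + xs.sum + (y + ys.sum) by ring]
  field_simp

theorem dissociation_shuffle (xs ys : List ℝ)
    (hx : ∀ x ∈ xs, 0 < x) (hy : ∀ y ∈ ys, 0 < y) :
    ((shuffles xs ys).map pL).sum = pL xs * pL ys := by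
  induction xs, ys using shuffles.induct with
  | case1 ys => simp [shuffles, pL]
  | case2 x xs => simp [shuffles, pL]
  | case3 x xs y ys ih₁ ih₂ =>
    have hX : 0 < x + xs.sum := List.sum_pos _ hx (List.cons_ne_nil _ _)
    have hY : 0 < y + ys.sum := List.sum_pos _ hy (List.cons_ne_nil _ _)
    rw [shuffles, List.map_append, List.sum_append,
      sum_map_pL_map_cons x _ fun _ => sum_eq_of_mem_shuffles,
      sum_map_pL_map_cons y _ fun _ => sum_eq_of_mem_shuffles,
      ih₁ (fun a ha => hx a (.tail _ ha)) hy, ih₂ hx fun a ha => hy a (.tail _ ha)]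
    exact (pL_cons_mul_pL_cons hX hY).symm
end

section
/- For the geometric size function w(i) = q^i with 0 < q < 1, the expected number of inversions D_n among items {1,...,n} in the size-biased order satisfies E[D_n] = ∑_{k=1}^{n-1} (n-k)/(1+q^{-k}), and E[D_n]/n → c_q = ∑_{k=1}^∞ 1/(1+q^{-k}) as n → ∞, where the series defining c_q converges. -/
/-!
The inversion probability of a pair `i < j` depends only on the gap `k = j - i`: it is
`1 / (1 + q^(-k))`. Counting the `n - k` pairs with gap `k` gives the closed form. Grouping the
pairs by `j` instead, `E[D_n]` is the sum of the first `n` partial sums of the series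
`∑ 1 / (1 + q^(-k))`, which is dominated by a geometric series; so `E[D_n] / n` is a Cesàro mean
of a convergent sequence.
-/

open Filter

/-- Expected number of inversions among items `{1,…,n}` for the geometric
size function `w(i) = q^i`: the sum of `q^j/(q^j+q^i)` over `1 ≤ i < j ≤ n`. -/
noncomputable def expInv (q : ℝ) (n : ℕ) : ℝ :=
  ∑ j ∈ Finset.Icc 1 n, ∑ i ∈ Finset.Ico 1 j, q ^ j / (q ^ j + q ^ i)

open Finset

theorem Finset.sum_Icc_sum_Ico_eq_sum_Ico_mul {R : Type*} [CommRing R] (f : ℕ → R) (a n : ℕ) :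
    ∑ j ∈ Icc a n, ∑ k ∈ Ico a j, f k = ∑ k ∈ Ico a n, ((n : R) - k) * f k := by
  rw [sum_comm' (t' := Ico a n) (s' := fun k => Ioc k n) (fun j k => by
    simp only [mem_Icc, mem_Ico, mem_Ioc]; omega)]
  refine sum_congr rfl fun k hk => ?_
  rw [sum_const, Nat.card_Ioc, nsmul_eq_mul, Nat.cast_sub (mem_Ico.1 hk).2.le]

theorem Finset.sum_Ico_one_sub {M : Type*} [AddCommMonoid M] (f : ℕ → M) (j : ℕ) :
    ∑ i ∈ Ico 1 j, f (j - i) = ∑ k ∈ Ico 1 j, f k := by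
  rw [sum_Ico_reflect f 1 (Nat.le_succ j)]
  simp

theorem Finset.sum_Icc_one_sum_Ico_one {M : Type*} [AddCommMonoid M] (f : ℕ → M) (n : ℕ) :
    ∑ j ∈ Icc 1 n, ∑ k ∈ Ico 1 j, f k = ∑ j ∈ range n, ∑ k ∈ range j, f (k + 1) := by
  rw [← Ico_add_one_right_eq_Icc, sum_Ico_eq_sum_range]
  simp [sum_Ico_eq_sum_range, add_comm]

theorem pow_div_pow_add_pow_of_le {K : Type*} [Field K] {q : K} (hq : q ≠ 0) {i j : ℕ}
    (hij : i ≤ j) : q ^ j / (q ^ j + q ^ i) = 1 / (1 + q ^ (-((j - i : ℕ) : ℤ))) := by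
  rw [zpow_neg, zpow_natCast, pow_sub₀ q hq hij]
  field_simp

theorem summable_one_div_one_add_zpow_neg {q : ℝ} (hq0 : 0 < q) (hq1 : q < 1) :
    Summable fun k : ℕ => 1 / (1 + q ^ (-(k + 1 : ℤ))) := by
  refine Summable.of_nonneg_of_le (fun k => by positivity) (fun k => ?_)
    ((summable_nat_add_iff 1).2 (summable_geometric_of_lt_one hq0.le hq1))
  calc 1 / (1 + q ^ (-(k + 1 : ℤ))) ≤ 1 / q ^ (-(k + 1 : ℤ)) :=
        one_div_le_one_div_of_le (by positivity) (by linarith)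
    _ = q ^ (k + 1) := by rw [one_div, zpow_neg, inv_inv]; norm_cast

theorem expInv_eq_sum_Icc_sum_Ico {q : ℝ} (hq : q ≠ 0) (n : ℕ) :
    expInv q n = ∑ j ∈ Icc 1 n, ∑ k ∈ Ico 1 j, 1 / (1 + q ^ (-(k : ℤ))) := by
  refine sum_congr rfl fun j _ => ?_
  rw [← sum_Ico_one_sub (fun k : ℕ => 1 / (1 + q ^ (-(k : ℤ))))]
  exact sum_congr rfl fun i hi => pow_div_pow_add_pow_of_le hq (mem_Ico.1 hi).2.le

theorem geometric_inversions (q : ℝ) (hq0 : 0 < q) (hq1 : q < 1) :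
    (∀ n : ℕ, expInv q n =
        ∑ k ∈ Finset.Icc 1 (n - 1), ((n : ℝ) - k) / (1 + q ^ (-(k : ℤ)))) ∧
      (Summable fun k : ℕ => 1 / (1 + q ^ (-(k + 1 : ℤ)))) ∧
      Tendsto (fun n : ℕ => expInv q n / n) atTop
        (nhds (∑' k : ℕ, 1 / (1 + q ^ (-(k + 1 : ℤ))))) := by
  have hsum := summable_one_div_one_add_zpow_neg hq0 hq1
  refine ⟨fun n => ?_, hsum, ?_⟩
  · rw [expInv_eq_sum_Icc_sum_Ico hq0.ne', sum_Icc_sum_Ico_eq_sum_Ico_mul]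
    rcases Nat.eq_zero_or_pos n with rfl | hn
    · simp
    rw [Icc_sub_one_right_eq_Ico_of_not_isMin (by simpa using hn.ne')]
    simp_rw [mul_one_div]
  · refine hsum.hasSum.tendsto_sum_nat.cesaro.congr fun n => ?_
    rw [expInv_eq_sum_Icc_sum_Ico hq0.ne', sum_Icc_one_sum_Ico_one, div_eq_inv_mul]
    push_cast
    rfl
end
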